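/- If a topological group G acts continuously on a pointed topological space X, then the class in the fundamental group π₁(X, x₀) represented by the orbit loop t ↦ (γ(t)) • x₀, for γ a loop at the identity of G, is central in π₁(X, x₀). -/

import Mathlib

/-! In `G × X` the loops `(γ, x₀) ⬝ (1, α)` and `(1, α) ⬝ (γ, x₀)` are the two boundary
routes across the square `γ × α`, so both are homotopic to its diagonal `γ.prod α`. Their
images under the action map `G × X → X` are the two products of the orbit loop with `α`,
as `1 • α t = α t`. -/

namespace Path.Homotopic

variable {Y Z W : Type*} [TopologicalSpace Y] [TopologicalSpace Z] [TopologicalSpace W]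

theorem prod_refl_trans_refl_prod {y₀ y₁ : Y} {z₀ z₁ : Z} (p : Path y₀ y₁) (q : Path z₀ z₁) :
    ((p.prod (Path.refl z₀)).trans ((Path.refl y₁).prod q)).Homotopic (p.prod q) := by
  rw [trans_prod_eq_prod_trans]
  exact Nonempty.map2 prodHomotopy ⟨Homotopy.transRefl p⟩ ⟨Homotopy.reflTrans q⟩

theorem refl_prod_trans_prod_refl {y₀ y₁ : Y} {z₀ z₁ : Z} (p : Path y₀ y₁) (q : Path z₀ z₁) :
    (((Path.refl y₀).prod q).trans (p.prod (Path.refl z₁))).Homotopic (p.prod q) := by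
  rw [trans_prod_eq_prod_trans]
  exact Nonempty.map2 prodHomotopy ⟨Homotopy.reflTrans p⟩ ⟨Homotopy.transRefl q⟩

theorem trans_comm_of_eq_map_prod (f : C(Y × Z, W)) {y : Y} {z : Z} {w : W}
    {p : Path y y} {q : Path z z} {a b : Path w w}
    (ha : ∀ t, a t = f (p t, z)) (hb : ∀ t, b t = f (y, q t)) :
    (a.trans b).Homotopic (b.trans a) := by
  have hw : w = f (y, z) := by simpa using ha 0
  have ha' : a = ((p.prod (Path.refl z)).map f.continuous).cast hw hw := by
    ext t; simp [ha]
  have hb' : b = (((Path.refl y).prod q).map f.continuous).cast hw hw := by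
    ext t; simp [hb]
  rw [ha', hb', ← cast_trans, ← cast_trans, ← map_trans, ← map_trans]
  exact (((prod_refl_trans_refl_prod p q).trans
    (refl_prod_trans_prod_refl p q).symm).map f).pathCast hw hw

end Path.Homotopic

/-- If a topological group `G` acts continuously on a pointed topological
space `X`, then the class in `π₁(X, x₀)` represented by the orbit loop
`t ↦ γ(t) • x₀`, for `γ` a loop at the identity of `G`, is central in `π₁(X, x₀)`:
its homotopy class commutes with the homotopy class of every loop at `x₀`. -/
theorem orbit_loop_central {G X : Type*} [TopologicalSpace G] [Group G]
    [TopologicalSpace X] [MulAction G X] [ContinuousSMul G X]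
    (x₀ : X) (γ : Path (1 : G) (1 : G)) :
    ∀ α : Path x₀ x₀,
      (⟦(Path.mk ⟨fun t => γ t • x₀, (γ.continuous.smul continuous_const : _)⟩
          (by simp) (by simp) : Path x₀ x₀).trans α⟧ :
            Path.Homotopic.Quotient x₀ x₀)
        = ⟦α.trans (Path.mk ⟨fun t => γ t • x₀,
            (γ.continuous.smul continuous_const : _)⟩ (by simp) (by simp))⟧ := by
  intro α
  exact Quotient.sound <| Path.Homotopic.trans_comm_of_eq_map_prod
      ⟨fun gx : G × X => gx.1 • gx.2, continuous_smul⟩ (p := γ) (q := α)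
      (fun _ => rfl) (fun t => (one_smul G (α t)).symm)
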